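/- Consider a blind stochastic game with finite state set $\mathcal{K}$ and finite action sets $\mathcal{I}, \mathcal{J}$, with stochastic transition matrices $P(i,j)$ for each action pair. Suppose the game is ergodic: for every $\varepsilon > 0$ there exists $m_\varepsilon$ such that for every sequence of action pairs $a^{m_\varepsilon} = (a_1, \dots, a_{m_\varepsilon})$, the product $T(a^{m_\varepsilon}) = P(a_1) \cdots P(a_{m_\varepsilon})$ satisfies $\tau_e(T(a^{m_\varepsilon})) \le \varepsilon/2$. Then for every pair of behavior strategies $(\sigma, \tau)$ there exists a belief $\bar b \in \Delta(\mathcal{K})$ such that for all initial beliefs $b \in \Delta(\mathcal{K})$, $\mathbb{P}^b_{\sigma,\tau}\big( \|B_{m_\varepsilon} - \bar b\|_1 \le \varepsilon \big) \ge |\mathcal{I} \times \mathcal{J}|^{-m_\varepsilon}$, where $B_{m_\varepsilon}$ is the posterior belief after $m_\varepsilon$ stages. -/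

import Mathlib

/-- The Dobrushin coefficient of ergodicity. -/
noncomputable def taue {K : Type*} [Fintype K] [Nonempty K] (P : K → K → ℝ) : ℝ :=
  (1 / 2) * Finset.univ.sup' Finset.univ_nonempty
    (fun kk : K × K => ∑ k', |P kk.1 k' - P kk.2 k'|)

/-- Product of the transition matrices along a finite sequence of action pairs:
`T(a₁ ⋯ a_m) = P(a₁) ⋯ P(a_m)`. -/
noncomputable def matProdL {K A : Type*} [Fintype K] [DecidableEq K]
    (P : A → K → K → ℝ) : List A → K → K → ℝ
  | [] => fun k k' => if k = k' then 1 else 0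
  | a :: l => fun k k' => ∑ j, P a k j * matProdL P l j k'

/-- Evolution of a belief along a sequence of action pairs in a blind stochastic game:
`b ↦ bᵀ P(a₁) ⋯ P(a_m)`. -/
noncomputable def pushBelief {K A : Type*} [Fintype K] (P : A → K → K → ℝ) :
    (K → ℝ) → List A → K → ℝ
  | b, [] => b
  | b, a :: l => pushBelief P (fun k' => ∑ k, b k * P a k k') l

/-- Probability that the behavior strategies `σ` and `τ` produce a given sequence of action
pairs (continuing from the history `past`), in a blind stochastic game. -/
noncomputable def stratW {I J : Type*} (σ : List (I × J) → I → ℝ)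
    (τ : List (I × J) → J → ℝ) : List (I × J) → List (I × J) → ℝ
  | _, [] => 1
  | past, a :: rest => σ past a.1 * τ past a.2 * stratW σ τ (past ++ [a]) rest

section Aux

variable {K A : Type*} [Fintype K] [DecidableEq K]

lemma matProdL_nonneg (P : A → K → K → ℝ) (hP : ∀ a k k', 0 ≤ P a k k') :
    ∀ (l : List A) (k k' : K), 0 ≤ matProdL P l k k' := by
  intro l
  induction l with
  | nil => intro k k'; simp only [matProdL]; split <;> norm_num
  | cons a l ih =>
    intro k k'
    exact Finset.sum_nonneg fun j _ => mul_nonneg (hP _ _ _) (ih _ _)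

lemma matProdL_row_sum (P : A → K → K → ℝ) (hP : ∀ a k, ∑ k', P a k k' = 1) :
    ∀ (l : List A) (k : K), ∑ k', matProdL P l k k' = 1 := by
  intro l
  induction l with
  | nil => intro k; simp [matProdL]
  | cons a l ih =>
    intro k
    show ∑ k', ∑ j, P a k j * matProdL P l j k' = 1
    rw [Finset.sum_comm]
    simp only [← Finset.mul_sum, ih, mul_one]
    exact hP a k

lemma pushBelief_eq (P : A → K → K → ℝ) :
    ∀ (l : List A) (b : K → ℝ) (k : K),
      pushBelief P b l k = ∑ k₀, b k₀ * matProdL P l k₀ k := by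
  intro l
  induction l with
  | nil =>
    intro b k
    simp only [pushBelief, matProdL, mul_ite, mul_one, mul_zero, Finset.sum_ite_eq',
      Finset.mem_univ, if_true]
  | cons a l ih =>
    intro b k
    show pushBelief P (fun k' => ∑ k₀, b k₀ * P a k₀ k') l k
      = ∑ k₀, b k₀ * ∑ j, P a k₀ j * matProdL P l j k
    rw [ih]
    simp only [Finset.sum_mul, Finset.mul_sum, mul_assoc]
    exact Finset.sum_comm

lemma stratW_nonneg {I J : Type*} (σ : List (I × J) → I → ℝ) (τ : List (I × J) → J → ℝ)
    (hσ : ∀ h i, 0 ≤ σ h i) (hτ : ∀ h j, 0 ≤ τ h j) :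
    ∀ (l past : List (I × J)), 0 ≤ stratW σ τ past l := by
  intro l
  induction l with
  | nil => intro past; exact zero_le_one
  | cons a rest ih =>
    intro past
    exact mul_nonneg (mul_nonneg (hσ _ _) (hτ _ _)) (ih _)

lemma stratW_sum {I J : Type*} [Fintype I] [Fintype J]
    (σ : List (I × J) → I → ℝ) (τ : List (I × J) → J → ℝ)
    (hσ : ∀ h, ∑ i, σ h i = 1) (hτ : ∀ h, ∑ j, τ h j = 1) :
    ∀ (n : ℕ) (past : List (I × J)),
      ∑ a : Fin n → I × J, stratW σ τ past (List.ofFn a) = 1 := by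
  intro n
  induction n with
  | zero => intro past; simp [stratW]
  | succ n ih =>
    intro past
    rw [← Equiv.sum_comp (Fin.consEquiv (fun _ : Fin (n + 1) => I × J))
      (fun f => stratW σ τ past (List.ofFn f))]
    rw [Fintype.sum_prod_type]
    show ∑ x : I × J, ∑ y : Fin n → I × J,
      stratW σ τ past (List.ofFn ((Fin.consEquiv (fun _ : Fin (n+1) => I × J)) (x, y))) = 1
    have hterm : ∀ (a : I × J) (g : Fin n → I × J),
        stratW σ τ past (List.ofFn ((Fin.consEquiv (fun _ : Fin (n+1) => I × J)) (a, g)))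
          = σ past a.1 * τ past a.2 * stratW σ τ (past ++ [a]) (List.ofFn g) := by
      intro a g
      have h1 : List.ofFn (Fin.cons a g : Fin (n+1) → I × J) = a :: List.ofFn g := by
        rw [List.ofFn_succ]; simp
      have h0 : (Fin.consEquiv (fun _ : Fin (n+1) => I × J)) (a, g)
          = (Fin.cons a g : Fin (n+1) → I × J) := rfl
      rw [h0, h1]
      rfl
    rw [show ∑ x : I × J, ∑ y : Fin n → I × J,
        stratW σ τ past (List.ofFn ((Fin.consEquiv (fun _ : Fin (n+1) => I × J)) (x, y)))
      = ∑ x : I × J, ∑ y : Fin n → I × J,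
        σ past x.1 * τ past x.2 * stratW σ τ (past ++ [x]) (List.ofFn y) from
      Finset.sum_congr rfl fun x _ => Finset.sum_congr rfl fun y _ => hterm x y]
    have h2 : ∀ a : I × J, ∑ g : Fin n → I × J,
        σ past a.1 * τ past a.2 * stratW σ τ (past ++ [a]) (List.ofFn g)
        = σ past a.1 * τ past a.2 := by
      intro a; rw [← Finset.mul_sum, ih, mul_one]
    simp only [h2]

    rw [Fintype.sum_prod_type]
    simp only [← Finset.mul_sum, hτ, mul_one]
    exact hσ past

lemma dobrushin [Nonempty K] (T : K → K → ℝ) (ε : ℝ) (hε : 0 ≤ ε)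
    (hT : ∀ k kb, ∑ k', |T k k' - T kb k'| ≤ ε)
    (b b' : K → ℝ) (hb : ∀ k, 0 ≤ b k) (hb1 : ∑ k, b k = 1)
    (hb' : ∀ k, 0 ≤ b' k) (hb'1 : ∑ k, b' k = 1) :
    ∑ k, |∑ k₀, (b k₀ - b' k₀) * T k₀ k| ≤ ε := by
  set p : K → ℝ := fun k => max (b k - b' k) 0 with hp
  set q : K → ℝ := fun k => max (-(b k - b' k)) 0 with hq
  have hpq : ∀ k, b k - b' k = p k - q k := fun k =>
    (max_zero_sub_max_neg_zero_eq_self (b k - b' k)).symm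
  have hp0 : ∀ k, 0 ≤ p k := fun k => le_max_right _ _
  have hq0 : ∀ k, 0 ≤ q k := fun k => le_max_right _ _
  set s : ℝ := ∑ k, p k with hs
  have hqs : ∑ k, q k = s := by
    have : ∑ k, (p k - q k) = 0 := by
      simp only [← hpq, Finset.sum_sub_distrib, hb1, hb'1, sub_self]
    rw [Finset.sum_sub_distrib] at this
    linarith
  have hs0 : 0 ≤ s := Finset.sum_nonneg fun k _ => hp0 k
  have hs1 : s ≤ 1 := by
    rw [← hb1]
    apply Finset.sum_le_sum
    intro k _
    exact max_le (by linarith [hb' k]) (hb k)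
  rcases eq_or_lt_of_le hs0 with hse | hslt
  · -- s = 0, so p = q = 0 and b = b'
    have hpz : ∀ k, p k = 0 := by
      intro k
      have := (Finset.sum_eq_zero_iff_of_nonneg (fun k _ => hp0 k)).mp hse.symm
      exact this k (Finset.mem_univ k)
    have hqz : ∀ k, q k = 0 := by
      intro k
      have := (Finset.sum_eq_zero_iff_of_nonneg (fun k _ => hq0 k)).mp (hqs.trans hse.symm)
      exact this k (Finset.mem_univ k)
    have : ∀ k, b k - b' k = 0 := fun k => by rw [hpq k, hpz k, hqz k, sub_zero]
    simp only [this, zero_mul, Finset.sum_const_zero, abs_zero]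
    exact hε
  · -- s > 0
    have eA : ∀ k, ∑ k₀, ∑ kb, p k₀ * q kb * T k₀ k = s * ∑ k₀, p k₀ * T k₀ k := by
      intro k
      have h1 : ∀ k₀, ∑ kb, p k₀ * q kb * T k₀ k = s * (p k₀ * T k₀ k) := by
        intro k₀
        rw [← hqs, Finset.sum_mul]
        exact Finset.sum_congr rfl fun kb _ => by ring
      simp only [h1]
      rw [Finset.mul_sum]
    have eB : ∀ k, ∑ k₀, ∑ kb, p k₀ * q kb * T kb k = s * ∑ kb, q kb * T kb k := by
      intro k
      have h1 : ∀ k₀, ∑ kb, p k₀ * q kb * T kb k = p k₀ * ∑ kb, q kb * T kb k := by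
        intro k₀
        rw [Finset.mul_sum]
        exact Finset.sum_congr rfl fun kb _ => by ring
      simp only [h1]
      rw [← Finset.sum_mul, ← hs]
    have key : ∀ k, ∑ k₀, (b k₀ - b' k₀) * T k₀ k
        = s⁻¹ * ∑ k₀, ∑ kb, p k₀ * q kb * (T k₀ k - T kb k) := by
      intro k
      have esplit : ∑ k₀, ∑ kb, p k₀ * q kb * (T k₀ k - T kb k)
          = s * (∑ k₀, p k₀ * T k₀ k) - s * (∑ kb, q kb * T kb k) := by
        simp only [mul_sub, Finset.sum_sub_distrib]
        rw [eA k, eB k]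
      have lhseq : ∑ k₀, (b k₀ - b' k₀) * T k₀ k
          = (∑ k₀, p k₀ * T k₀ k) - (∑ k₀, q k₀ * T k₀ k) := by
        simp only [hpq, sub_mul, Finset.sum_sub_distrib]
      rw [lhseq, esplit, mul_sub, ← mul_assoc, ← mul_assoc,
        inv_mul_cancel₀ hslt.ne', one_mul, one_mul]
    calc ∑ k, |∑ k₀, (b k₀ - b' k₀) * T k₀ k|
        ≤ ∑ k, s⁻¹ * ∑ k₀, ∑ kb, p k₀ * q kb * |T k₀ k - T kb k| := by
          apply Finset.sum_le_sum
          intro k _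
          rw [key k, abs_mul, abs_of_nonneg (inv_nonneg.mpr hs0)]
          apply mul_le_mul_of_nonneg_left _ (inv_nonneg.mpr hs0)
          calc |∑ k₀, ∑ kb, p k₀ * q kb * (T k₀ k - T kb k)|
              ≤ ∑ k₀, |∑ kb, p k₀ * q kb * (T k₀ k - T kb k)| := Finset.abs_sum_le_sum_abs _ _
            _ ≤ ∑ k₀, ∑ kb, p k₀ * q kb * |T k₀ k - T kb k| := by
                apply Finset.sum_le_sum; intro k₀ _
                calc |∑ kb, p k₀ * q kb * (T k₀ k - T kb k)|
                    ≤ ∑ kb, |p k₀ * q kb * (T k₀ k - T kb k)| := Finset.abs_sum_le_sum_abs _ _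
                  _ = ∑ kb, p k₀ * q kb * |T k₀ k - T kb k| := by
                      apply Finset.sum_congr rfl; intro kb _
                      rw [abs_mul, abs_of_nonneg (mul_nonneg (hp0 k₀) (hq0 kb))]
      _ = s⁻¹ * ∑ k₀, ∑ kb, p k₀ * q kb * ∑ k, |T k₀ k - T kb k| := by
          rw [← Finset.mul_sum]
          congr 1
          rw [Finset.sum_comm]
          apply Finset.sum_congr rfl; intro k₀ _
          rw [Finset.sum_comm]
          apply Finset.sum_congr rfl; intro kb _
          rw [Finset.mul_sum]
      _ ≤ s⁻¹ * ∑ k₀, ∑ kb, p k₀ * q kb * ε := by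
          apply mul_le_mul_of_nonneg_left _ (inv_nonneg.mpr hs0)
          apply Finset.sum_le_sum; intro k₀ _
          apply Finset.sum_le_sum; intro kb _
          exact mul_le_mul_of_nonneg_left (hT k₀ kb) (mul_nonneg (hp0 k₀) (hq0 kb))
      _ = s⁻¹ * (s * s * ε) := by
          congr 1
          have h3 : ∑ k₀, ∑ kb, p k₀ * q kb * ε = (∑ k₀, ∑ kb, p k₀ * q kb) * ε := by
            rw [Finset.sum_mul]
            exact Finset.sum_congr rfl fun k₀ _ => by rw [Finset.sum_mul]
          rw [h3, ← Finset.sum_mul_sum, hqs, ← hs]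
      _ ≤ ε := by
          rw [← mul_assoc, ← mul_assoc, inv_mul_cancel₀ hslt.ne', one_mul]
          nlinarith

end Aux

open Classical in
/-- Ergodic blind stochastic games satisfy the Doeblin condition. -/
theorem stmt_10 {K I J : Type*} [Fintype K] [DecidableEq K] [Nonempty K]
    [Fintype I] [Nonempty I] [Fintype J] [Nonempty J]
    (P : I × J → K → K → ℝ)
    (hP : ∀ a k, (∀ k', 0 ≤ P a k k') ∧ ∑ k', P a k k' = 1)
    (ε : ℝ) (hε : 0 < ε) (m : ℕ)
    (herg : ∀ l : List (I × J), l.length = m → taue (matProdL P l) ≤ ε / 2)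
    (σ : List (I × J) → I → ℝ) (τ : List (I × J) → J → ℝ)
    (hσ : ∀ h, (∀ i, 0 ≤ σ h i) ∧ ∑ i, σ h i = 1)
    (hτ : ∀ h, (∀ j, 0 ≤ τ h j) ∧ ∑ j, τ h j = 1) :
    ∃ bbar : K → ℝ, (∀ k, 0 ≤ bbar k) ∧ (∑ k, bbar k = 1) ∧
      ∀ b : K → ℝ, (∀ k, 0 ≤ b k) → ∑ k, b k = 1 →
        1 / (Fintype.card (I × J) : ℝ) ^ m ≤
          ∑ a : Fin m → I × J,
            if ∑ k, |pushBelief P b (List.ofFn a) k - bbar k| ≤ ε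
            then stratW σ τ [] (List.ofFn a) else 0 := by
  have hPn : ∀ a k k', 0 ≤ P a k k' := fun a k k' => (hP a k).1 k'
  have hPs : ∀ a k, ∑ k', P a k k' = 1 := fun a k => (hP a k).2
  have hσn : ∀ h i, 0 ≤ σ h i := fun h i => (hσ h).1 i
  have hτn : ∀ h j, 0 ≤ τ h j := fun h j => (hτ h).1 j
  -- find a sequence of actions with probability at least card⁻ᵐ
  have hcardIJ : (0:ℝ) < (Fintype.card (I × J) : ℝ) := by
    exact_mod_cast Fintype.card_pos
  have hsum1 : ∑ a : Fin m → I × J, stratW σ τ [] (List.ofFn a) = 1 :=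
    stratW_sum σ τ (fun h => (hσ h).2) (fun h => (hτ h).2) m []
  have hconst : ∑ _a : Fin m → I × J, (1 / (Fintype.card (I × J) : ℝ) ^ m) = 1 := by
    rw [Finset.sum_const, Finset.card_univ, Fintype.card_fun, Fintype.card_fin,
      nsmul_eq_mul]
    push_cast
    field_simp
  obtain ⟨astar, -, hastar⟩ :=
    Finset.exists_le_of_sum_le (s := (Finset.univ : Finset (Fin m → I × J)))
      (f := fun _ => 1 / (Fintype.card (I × J) : ℝ) ^ m)
      (g := fun a => stratW σ τ [] (List.ofFn a))
      Finset.univ_nonempty (by rw [hconst, hsum1])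
  -- the matrix along astar contracts by ε
  set T : K → K → ℝ := matProdL P (List.ofFn astar) with hTdef
  have hT : ∀ k kb, ∑ k', |T k k' - T kb k'| ≤ ε := by
    intro k kb
    have h1 := herg (List.ofFn astar) List.length_ofFn
    rw [taue] at h1
    have h2 : Finset.univ.sup' Finset.univ_nonempty
        (fun kk : K × K => ∑ k', |matProdL P (List.ofFn astar) kk.1 k'
          - matProdL P (List.ofFn astar) kk.2 k'|) ≤ ε := by linarith
    calc ∑ k', |T k k' - T kb k'|
        = (fun kk : K × K => ∑ k', |matProdL P (List.ofFn astar) kk.1 k'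
            - matProdL P (List.ofFn astar) kk.2 k'|) (k, kb) := rfl
      _ ≤ _ := Finset.le_sup'
          (fun kk : K × K => ∑ k', |matProdL P (List.ofFn astar) kk.1 k'
            - matProdL P (List.ofFn astar) kk.2 k'|) (Finset.mem_univ (k, kb))
      _ ≤ ε := h2
  -- the reference belief
  set b₀ : K → ℝ := fun _ => (Fintype.card K : ℝ)⁻¹ with hb₀def
  have hcardK : (0:ℝ) < (Fintype.card K : ℝ) := by exact_mod_cast Fintype.card_pos
  have hb₀n : ∀ k, 0 ≤ b₀ k := fun k => inv_nonneg.mpr hcardK.le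
  have hb₀s : ∑ k, b₀ k = 1 := by
    rw [hb₀def, Finset.sum_const, Finset.card_univ, nsmul_eq_mul,
      mul_inv_cancel₀ hcardK.ne']
  refine ⟨pushBelief P b₀ (List.ofFn astar), ?_, ?_, ?_⟩
  · intro k
    rw [pushBelief_eq]
    exact Finset.sum_nonneg fun k₀ _ =>
      mul_nonneg (hb₀n k₀) (matProdL_nonneg P hPn _ _ _)
  · simp only [pushBelief_eq]
    rw [Finset.sum_comm]
    simp only [← Finset.mul_sum, matProdL_row_sum P hPs, mul_one]
    exact hb₀s
  · intro b hb hb1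
    have hdiff : ∀ k, pushBelief P b (List.ofFn astar) k
        - pushBelief P b₀ (List.ofFn astar) k
        = ∑ k₀, (b k₀ - b₀ k₀) * T k₀ k := by
      intro k
      rw [pushBelief_eq, pushBelief_eq]
      simp only [sub_mul, Finset.sum_sub_distrib]
      rfl
    have hcond : ∑ k, |pushBelief P b (List.ofFn astar) k
        - pushBelief P b₀ (List.ofFn astar) k| ≤ ε := by
      simp only [hdiff]
      exact dobrushin T ε hε.le hT b b₀ hb hb1 hb₀n hb₀s
    calc 1 / (Fintype.card (I × J) : ℝ) ^ m
        ≤ stratW σ τ [] (List.ofFn astar) := hastar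
      _ = if ∑ k, |pushBelief P b (List.ofFn astar) k
            - pushBelief P b₀ (List.ofFn astar) k| ≤ ε
          then stratW σ τ [] (List.ofFn astar) else 0 := (if_pos hcond).symm
      _ ≤ ∑ a : Fin m → I × J,
            if ∑ k, |pushBelief P b (List.ofFn a) k
              - pushBelief P b₀ (List.ofFn astar) k| ≤ ε
            then stratW σ τ [] (List.ofFn a) else 0 := by
          apply Finset.single_le_sum (f := fun a : Fin m → I × J =>
            if ∑ k, |pushBelief P b (List.ofFn a) k
              - pushBelief P b₀ (List.ofFn astar) k| ≤ ε
            then stratW σ τ [] (List.ofFn a) else 0)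
            (fun a _ => ?_) (Finset.mem_univ astar)
          split
          · exact stratW_nonneg σ τ hσn hτn _ _
          · exact le_rfl
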